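/- Let j ≥ 0 be an integer with 2^j ≤ ℓ. Then x ∈ F_2^n is a fixed point of the 2^j-fold iterate of χ_{n,m} (i.e., χ_{n,m}^{2^j}(x) = x) if and only if θ_{m,2^j}(x) = 0, which holds if and only if for every index i ∈ {0, 1, …, n−1} it is not the case that x_{i+2^j·m} = 1 and x_{i+t} = 0 for all t with 1 ≤ t ≤ 2^j·m − 1 and m ∤ t (indices mod n); equivalently, x contains no cyclic substring of the form (0_{m−1}, *, 0_{m−1}, *, …, 0_{m−1}, 1) of length 2^j·m, where * is an arbitrary bit and 0_{m−1} denotes m−1 consecutive zero bits. -/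

import Mathlib

/-- Index `i + j` computed modulo `n`, for `i : Fin n` and `j : ℕ`. -/
def idx {n : ℕ} (i : Fin n) (j : ℕ) : Fin n :=
  ⟨(i.val + j) % n, Nat.mod_lt _ i.pos⟩

/-- The map `θ_{m,k} : F_2^n → F_2^n`; `θ_{m,0}` is the identity map, and for `k ≥ 1`,
`(θ_{m,k}(x))_i = x_{i+mk} · ∏_{1 ≤ j ≤ mk−1, m ∤ j} (x_{i+j} + 1)` (indices mod `n`). -/
def theta (n m k : ℕ) : (Fin n → ZMod 2) → Fin n → ZMod 2 :=
  if k = 0 then id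
  else fun x i =>
    x (idx i (m * k)) *
      ∏ j ∈ (Finset.Ico 1 (m * k)).filter (fun j => ¬ m ∣ j), (x (idx i j) + 1)

/-!
Writing `GapsZero m a x i` for "`x_{i+t} = 0` whenever `1 ≤ t ≤ a - 1` and `m ∤ t`", the map
`θ_{m,k}` is `W_{mk}`, where `W_a x` is `i ↦ x_{i+a}` at the `i` with `GapsZero m a x i` and `0`
elsewhere. For `m ∣ a` the doubling identity `W_a (x + W_a x) = W_a x + W_{2a} x` holds: the gap
condition over a window of length `2a` splits into the conditions over its two halves, and a `1`
at the end `i + a` of the window at `i` sits at the gap offset `a - t` of the window at `i + t`.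
Over `F_2` the identity says `(id + W_a)^[2] = id + W_{2a}`, so `χ^{2^j} = id + θ_{2^j}`, whose
fixed points are the zeros of `θ_{2^j}`.
-/

lemma ZMod.eq_one_of_ne_zero_two : ∀ {u : ZMod 2}, u ≠ 0 → u = 1 := by decide

open Classical in
lemma ZMod.prod_add_one_two {ι : Type*} (s : Finset ι) (f : ι → ZMod 2) :
    ∏ i ∈ s, (f i + 1) = if ∀ i ∈ s, f i = 0 then 1 else 0 := by
  split_ifs with h
  · exact Finset.prod_eq_one fun i hi => by rw [h i hi, zero_add]
  · push Not at h
    obtain ⟨i, hi, hfi⟩ := h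
    exact Finset.prod_eq_zero hi (by rw [ZMod.eq_one_of_ne_zero_two hfi]; rfl)

section WindowMap

variable {n m a : ℕ}

@[simp]
lemma idx_zero (i : Fin n) : idx i 0 = i :=
  Fin.ext (by simp [idx, Nat.mod_eq_of_lt i.isLt])

lemma idx_idx (i : Fin n) (s t : ℕ) : idx (idx i s) t = idx i (s + t) := by
  simp only [idx, Nat.mod_add_mod, Nat.add_assoc]

def GapsZero (m a : ℕ) (x : Fin n → ZMod 2) (i : Fin n) : Prop :=
  ∀ t : ℕ, 1 ≤ t → t ≤ a - 1 → ¬ m ∣ t → x (idx i t) = 0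

open Classical in
noncomputable def windowMap (m a : ℕ) (x : Fin n → ZMod 2) (i : Fin n) : ZMod 2 :=
  if GapsZero m a x i then x (idx i a) else 0

lemma windowMap_of_gapsZero {x : Fin n → ZMod 2} {i : Fin n} (h : GapsZero m a x i) :
    windowMap m a x i = x (idx i a) :=
  if_pos h

lemma windowMap_of_not_gapsZero {x : Fin n → ZMod 2} {i : Fin n} (h : ¬ GapsZero m a x i) :
    windowMap m a x i = 0 :=
  if_neg h

lemma windowMap_ne_zero_iff {x : Fin n → ZMod 2} {i : Fin n} :
    windowMap m a x i ≠ 0 ↔ GapsZero m a x i ∧ x (idx i a) ≠ 0 := by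
  by_cases h : GapsZero m a x i
  · simp [windowMap_of_gapsZero h, h]
  · simp [windowMap_of_not_gapsZero h, h]

lemma windowMap_eq_zero_of_eq_zero {x : Fin n → ZMod 2} {i : Fin n} (h : x (idx i a) = 0) :
    windowMap m a x i = 0 := by
  by_contra hne
  exact (windowMap_ne_zero_iff.mp hne).2 h

lemma windowMap_zero (m : ℕ) : windowMap m 0 = (id : (Fin n → ZMod 2) → Fin n → ZMod 2) := by
  funext x i
  exact windowMap_of_gapsZero (fun t ht ht' _ => absurd ht' (by omega)) |>.trans (by simp)

lemma theta_eq_windowMap (n m k : ℕ) : theta n m k = windowMap m (m * k) := by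
  rcases Nat.eq_zero_or_pos k with rfl | hk
  · simp [theta, windowMap_zero]
  funext x i
  have hgaps : (∀ t ∈ (Finset.Ico 1 (m * k)).filter (fun t => ¬ m ∣ t), x (idx i t) = 0) ↔
      GapsZero m (m * k) x i := by
    simp only [Finset.mem_filter, Finset.mem_Ico, and_imp, GapsZero]
    refine forall_congr' fun t => imp_congr_right fun ht => ?_
    exact imp_congr_left (by omega)
  simp only [theta, hk.ne', if_false, ZMod.prod_add_one_two]
  by_cases h : GapsZero m (m * k) x i
  · rw [if_pos (hgaps.mpr h), mul_one, windowMap_of_gapsZero h]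
  · rw [if_neg (mt hgaps.mp h), mul_zero, windowMap_of_not_gapsZero h]

lemma windowMap_eq_zero_iff {x : Fin n → ZMod 2} :
    windowMap m a x = 0 ↔ ∀ i, ¬ (x (idx i a) = 1 ∧ GapsZero m a x i) := by
  rw [funext_iff]
  refine forall_congr' fun i => ?_
  rw [Pi.zero_apply, ← not_ne_iff, windowMap_ne_zero_iff, and_comm]
  exact not_congr (and_congr_left' ⟨ZMod.eq_one_of_ne_zero_two, fun h => h ▸ one_ne_zero⟩)

lemma gapsZero_add_self (hma : m ∣ a) {x : Fin n → ZMod 2} {i : Fin n} :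
    GapsZero m (a + a) x i ↔ GapsZero m a x i ∧ GapsZero m a x (idx i a) := by
  refine ⟨fun h => ⟨fun t ht hta hmt => h t ht (by omega) hmt, fun t ht hta hmt => ?_⟩, ?_⟩
  · rw [idx_idx]
    exact h (a + t) (by omega) (by omega) ((Nat.dvd_add_right hma).not.mpr hmt)
  · rintro ⟨hlo, hhi⟩ t ht hta hmt
    rcases lt_trichotomy t a with hlt | rfl | hgt
    · exact hlo t ht (by omega) hmt
    · exact absurd hma hmt
    · have hmt' : ¬ m ∣ t - a := fun hd => hmt <| by
        rw [← Nat.add_sub_cancel' hgt.le]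
        exact Nat.dvd_add hma hd
      have := hhi (t - a) (by omega) (by omega) hmt'
      rwa [idx_idx, Nat.add_sub_cancel' hgt.le] at this

lemma windowMap_add_self_of_gapsZero (hma : m ∣ a) {x : Fin n → ZMod 2} {i : Fin n}
    (h : GapsZero m a x i) : windowMap m (a + a) x i = windowMap m a x (idx i a) := by
  by_cases h' : GapsZero m a x (idx i a)
  · rw [windowMap_of_gapsZero ((gapsZero_add_self hma).mpr ⟨h, h'⟩), windowMap_of_gapsZero h',
      idx_idx]
  · rw [windowMap_of_not_gapsZero fun h'' => h' ((gapsZero_add_self hma).mp h'').2,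
      windowMap_of_not_gapsZero h']

lemma windowMap_add_self_of_not_gapsZero (hma : m ∣ a) {x : Fin n → ZMod 2} {i : Fin n}
    (h : ¬ GapsZero m a x i) : windowMap m (a + a) x i = 0 :=
  windowMap_of_not_gapsZero fun h' => h ((gapsZero_add_self hma).mp h').1

lemma not_gapsZero_shift (hma : m ∣ a) {x : Fin n → ZMod 2} {i : Fin n} {t : ℕ}
    (ht : 1 ≤ t) (hta : t ≤ a - 1) (hmt : ¬ m ∣ t) (h : x (idx i a) ≠ 0) :
    ¬ GapsZero m a x (idx i t) := fun hz => by
  have hdvd : ¬ m ∣ a - t := fun hd => hmt <| by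
    rw [← Nat.sub_sub_self (by omega : t ≤ a)]
    exact Nat.dvd_sub hma hd
  have := hz (a - t) (by omega) (by omega) hdvd
  rw [idx_idx, Nat.add_sub_cancel' (by omega : t ≤ a)] at this
  exact h this

lemma windowMap_shift_eq_zero (hma : m ∣ a) {x : Fin n → ZMod 2} {i : Fin n} {t : ℕ}
    (ht : 1 ≤ t) (hta : t ≤ a - 1) (hmt : ¬ m ∣ t)
    (h : x (idx i a) ≠ 0 ∨ GapsZero m a x (idx i a)) : windowMap m a x (idx i t) = 0 := by
  by_contra hne
  obtain ⟨hz, hx⟩ := windowMap_ne_zero_iff.mp hne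
  rcases h with h | h
  · exact not_gapsZero_shift hma ht hta hmt h hz
  · exact hx (by simpa [idx_idx, Nat.add_comm] using h t ht hta hmt)

lemma windowMap_add_windowMap_of_gapsZero (hma : m ∣ a) {x : Fin n → ZMod 2} {i : Fin n}
    (hx : GapsZero m a x i) :
    windowMap m a (x + windowMap m a x) i = (x + windowMap m a x) (idx i a) := by
  by_cases hya : (x + windowMap m a x) (idx i a) = 0
  · rw [hya, windowMap_eq_zero_of_eq_zero hya]
  refine windowMap_of_gapsZero fun t ht hta hmt => ?_
  have hend : x (idx i a) ≠ 0 ∨ GapsZero m a x (idx i a) := by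
    by_contra! hcon
    exact hya (by simp [hcon.1, windowMap_of_not_gapsZero hcon.2])
  simp [hx t ht hta hmt, windowMap_shift_eq_zero hma ht hta hmt hend]

lemma windowMap_add_windowMap_of_not_gapsZero (hma : m ∣ a) {x : Fin n → ZMod 2} {i : Fin n}
    (hx : ¬ GapsZero m a x i) : windowMap m a (x + windowMap m a x) i = 0 := by
  obtain ⟨t, ht, hta, hmt, hxt⟩ : ∃ t, 1 ≤ t ∧ t ≤ a - 1 ∧ ¬ m ∣ t ∧ x (idx i t) ≠ 0 := by
    simpa [GapsZero] using hx
  by_cases hyt : (x + windowMap m a x) (idx i t) = 0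
  -- The `1` at `i + t` is cancelled only if the window at `i + t` fires; then `x_{i+a} = 0` and
  -- the window at `i + a` contains the `1` at `i + a + t`, so `(x + W_a x)_{i+a} = 0`.
  · obtain ⟨hz, hxa⟩ : GapsZero m a x (idx i t) ∧ x (idx (idx i t) a) ≠ 0 := by
      refine windowMap_ne_zero_iff.mp fun hw => hxt ?_
      simpa [hw] using hyt
    have hend : x (idx i a) = 0 := by_contra fun h => not_gapsZero_shift hma ht hta hmt h hz
    have hnext : ¬ GapsZero m a x (idx i a) := fun h' =>
      hxa (by simpa [idx_idx, Nat.add_comm] using h' t ht hta hmt)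
    exact windowMap_eq_zero_of_eq_zero (by simp [hend, windowMap_of_not_gapsZero hnext])
  · exact windowMap_of_not_gapsZero fun h => hyt (h t ht hta hmt)

theorem windowMap_add_windowMap (hma : m ∣ a) (x : Fin n → ZMod 2) :
    windowMap m a (x + windowMap m a x) = windowMap m a x + windowMap m (a + a) x := by
  funext i
  by_cases hx : GapsZero m a x i
  · rw [windowMap_add_windowMap_of_gapsZero hma hx, Pi.add_apply, Pi.add_apply,
      windowMap_of_gapsZero hx, windowMap_add_self_of_gapsZero hma hx]
  · rw [windowMap_add_windowMap_of_not_gapsZero hma hx, Pi.add_apply,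
      windowMap_of_not_gapsZero hx, windowMap_add_self_of_not_gapsZero hma hx, add_zero]

theorem iterate_id_add_windowMap (hma : m ∣ a) (j : ℕ) :
    (id + windowMap m a : (Fin n → ZMod 2) → Fin n → ZMod 2)^[2 ^ j] =
      id + windowMap m (2 ^ j * a) := by
  induction j with
  | zero => simp
  | succ j ih =>
    rw [pow_succ, Function.iterate_mul, ih]
    funext x
    have hdvd : m ∣ 2 ^ j * a := Dvd.dvd.mul_left hma _
    simp only [Function.iterate_succ, Function.iterate_zero, Function.comp_apply, id_eq,
      Pi.add_apply, windowMap_add_windowMap hdvd]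
    rw [show 2 ^ j * 2 * a = 2 ^ j * a + 2 ^ j * a by ring]
    have hcancel : windowMap m (2 ^ j * a) x + windowMap m (2 ^ j * a) x = 0 :=
      funext fun i => CharTwo.add_self_eq_zero _
    rw [← add_assoc, add_assoc x, hcancel, add_zero]

end WindowMap

theorem stmt17_general (n m : ℕ) (j : ℕ) (x : Fin n → ZMod 2) :
    ((theta n m 0 + theta n m 1)^[2 ^ j] x = x ↔ theta n m (2 ^ j) x = 0) ∧
    (theta n m (2 ^ j) x = 0 ↔
      ∀ i : Fin n, ¬ (x (idx i (2 ^ j * m)) = 1 ∧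
        ∀ t : ℕ, 1 ≤ t → t ≤ 2 ^ j * m - 1 → ¬ m ∣ t → x (idx i t) = 0)) := by
  simp only [theta_eq_windowMap, mul_zero, mul_one, windowMap_zero, mul_comm m (2 ^ j)]
  refine ⟨?_, windowMap_eq_zero_iff⟩
  rw [iterate_id_add_windowMap dvd_rfl, Pi.add_apply, id_eq]
  exact add_eq_left

theorem stmt17 (n m : ℕ) (hn : 1 ≤ n) (hm : 2 ≤ m) (hmn : ¬ m ∣ n)
    (j : ℕ) (hj : 2 ^ j ≤ n / m) (x : Fin n → ZMod 2) :
    ((theta n m 0 + theta n m 1)^[2 ^ j] x = x ↔ theta n m (2 ^ j) x = 0) ∧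
    (theta n m (2 ^ j) x = 0 ↔
      ∀ i : Fin n, ¬ (x (idx i (2 ^ j * m)) = 1 ∧
        ∀ t : ℕ, 1 ≤ t → t ≤ 2 ^ j * m - 1 → ¬ m ∣ t → x (idx i t) = 0)) :=
  stmt17_general n m j x
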